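/- Fix a space-like covector η = (η⁰, η') on Minkowski space ℝ^{3+1} (so |η⁰| < |η'|, η' ≠ 0) and a point x. A symmetric 2-tensor f ∈ Sym²(ℝ⁴) satisfies f_{jk} θ^j θ^k = 0 for every θ = (1, v) with v ∈ S¹_η = {v ∈ S² : η⁰ + η'·v = 0} if and only if f belongs to the 5-dimensional subspace N = {c g + η ⊗ w + w ⊗ η : c ∈ ℝ, w ∈ ℝ⁴}, where g = diag(−1, 1, 1, 1). -/

import Mathlib

/-!
The hyperplane `η^⊥ = {θ : η · θ = 0}` is three-dimensional, and since `η` is space-like the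
Minkowski metric `g` restricted to it is Lorentzian. With `a, b` an orthonormal basis of `η'^⊥`
and `k = -η⁰/|η'|²`, the coordinates `θ = t (1, k η') + x (0, a) + y (0, b)` identify `η^⊥` with
`ℝ³`, the points `(1, v)`, `v ∈ S¹_η`, with the circle `t = 1, x² + y² = r²`
(`r² = 1 - k²|η'|² > 0`), and `g` with `x² + y² - r² t²`. A quadratic form on `ℝ³` vanishing on
that circle is a multiple of `x² + y² - r² t²`, so `f - c g` vanishes on `η^⊥` for some `c`.
Finally a symmetric form whose quadratic form vanishes on the kernel of a nonzero functional `φ`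
is `φ ⊗ w + w ⊗ φ`.
-/

namespace LinearMap.BilinForm

variable {V : Type*} [AddCommGroup V]

theorem IsSymm.exists_eq_mul_add_mul_of_ker {K : Type*} [Field K] [NeZero (2 : K)] [Module K V]
    {B : LinearMap.BilinForm K V} (hB : B.IsSymm) {φ : Module.Dual K V} (hφ : φ ≠ 0)
    (h : ∀ x, φ x = 0 → B x x = 0) :
    ∃ w : Module.Dual K V, ∀ x y, B x y = φ x * w y + w x * φ y := by
  obtain ⟨u, hu⟩ : ∃ u, φ u = 1 := by
    obtain ⟨x, hx⟩ := DFunLike.ne_iff.mp hφ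
    exact ⟨(φ x)⁻¹ • x, by simpa using inv_mul_cancel₀ hx⟩
  have hker : ∀ x y, φ x = 0 → φ y = 0 → B x y = 0 := by
    intro x y hx hy
    have hxy := h (x + y) (by simp [hx, hy])
    simp only [map_add, LinearMap.add_apply, h x hx, h y hy, hB.eq y x] at hxy
    have h2 : (2 : K) * B x y = 0 := by linear_combination hxy
    exact (mul_eq_zero.mp h2).resolve_left two_ne_zero
  -- `x - φ x • u ∈ ker φ`; expanding `B` on these projections gives the formula
  refine ⟨B u - (2⁻¹ * B u u) • φ, fun x y => ?_⟩
  have hproj := hker (x - φ x • u) (y - φ y • u) (by simp [hu]) (by simp [hu])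
  simp only [map_sub, map_smul, LinearMap.sub_apply, LinearMap.smul_apply, smul_eq_mul,
    hB.eq x u] at hproj ⊢
  linear_combination hproj + φ x * B u u * φ y * inv_mul_cancel₀ (two_ne_zero : (2 : K) ≠ 0)

theorem IsSymm.apply_self_eq_of_forall_circle [Module ℝ V] {B : LinearMap.BilinForm ℝ V}
    (hB : B.IsSymm) {T A C : V} {r : ℝ} (hr : r ≠ 0)
    (h : ∀ x y : ℝ, x ^ 2 + y ^ 2 = r ^ 2 → B (T + x • A + y • C) (T + x • A + y • C) = 0)
    (t x y : ℝ) :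
    B (t • T + x • A + y • C) (t • T + x • A + y • C) =
      B A A * (x ^ 2 + y ^ 2 - r ^ 2 * t ^ 2) := by
  have expand : ∀ t x y : ℝ, B (t • T + x • A + y • C) (t • T + x • A + y • C) =
      t ^ 2 * B T T + 2 * t * x * B T A + 2 * t * y * B T C + x ^ 2 * B A A
        + 2 * x * y * B A C + y ^ 2 * B C C := by
    intro t x y
    simp only [map_add, map_smul, LinearMap.add_apply, LinearMap.smul_apply, smul_eq_mul,
      hB.eq A T, hB.eq C T, hB.eq C A]
    ring
  have hP : ∀ x y : ℝ, x ^ 2 + y ^ 2 = r ^ 2 → B T T + 2 * x * B T A + 2 * y * B T C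
      + x ^ 2 * B A A + 2 * x * y * B A C + y ^ 2 * B C C = 0 := by
    intro x y hxy
    have h1 := expand 1 x y
    rw [one_smul, h x y hxy] at h1
    linear_combination -h1
  have h₁ := hP r 0 (by ring)
  have h₂ := hP (-r) 0 (by ring)
  have h₃ := hP 0 r (by ring)
  have h₄ := hP 0 (-r) (by ring)
  -- a point of the circle off the axes, needed to see the mixed term `B A C`
  have h₅ := hP (3 / 5 * r) (4 / 5 * r) (by ring)
  have hTA : B T A = 0 := by
    have : r * B T A = 0 := by linear_combination (h₁ - h₂) / 4
    exact (mul_eq_zero.mp this).resolve_left hr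
  have hTC : B T C = 0 := by
    have : r * B T C = 0 := by linear_combination (h₃ - h₄) / 4
    exact (mul_eq_zero.mp this).resolve_left hr
  have hAC : B A C = 0 := by
    have : r ^ 2 * B A C = 0 := by
      linear_combination 25 / 24 * h₅ - 9 / 48 * (h₁ + h₂) - 16 / 48 * (h₃ + h₄)
        - 5 / 4 * r * hTA - 5 / 3 * r * hTC
    exact (mul_eq_zero.mp this).resolve_left (pow_ne_zero 2 hr)
  have hCC : B C C = B A A := by
    have : r ^ 2 * (B C C - B A A) = 0 := by linear_combination (h₃ + h₄ - h₁ - h₂) / 2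
    exact sub_eq_zero.mp ((mul_eq_zero.mp this).resolve_left (pow_ne_zero 2 hr))
  rw [expand]
  linear_combination t ^ 2 / 2 * (h₁ + h₂) + 2 * t * x * hTA + 2 * t * y * hTC
    + 2 * x * y * hAC + y ^ 2 * hCC

end LinearMap.BilinForm

open Matrix

theorem exists_orthonormal_pair_orthogonal {u : Fin 3 → ℝ} (hu : u ≠ 0) :
    ∃ a b : Fin 3 → ℝ, a ⬝ᵥ a = 1 ∧ b ⬝ᵥ b = 1 ∧ a ⬝ᵥ b = 0 ∧ u ⬝ᵥ a = 0 ∧ u ⬝ᵥ b = 0 ∧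
      ∀ v, v = (u ⬝ᵥ v / u ⬝ᵥ u) • u + (a ⬝ᵥ v) • a + (b ⬝ᵥ v) • b := by
  set U : EuclideanSpace ℝ (Fin 3) := WithLp.toLp 2 u
  have hU : U ≠ 0 := by simpa [U] using hu
  have hN : ‖U‖ ≠ 0 := norm_ne_zero_iff.mpr hU
  have hunit : Orthonormal ℝ (({0} : Set (Fin 3)).domRestrict fun _ => ‖U‖⁻¹ • U) := by
    refine ⟨fun _ => norm_smul_inv_norm hU, fun i j hij => ?_⟩
    exact absurd (Subtype.ext (i.2.trans j.2.symm)) hij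
  obtain ⟨e, he⟩ := hunit.exists_orthonormalBasis_extension_of_card_eq (by simp)
  have he0 : e 0 = ‖U‖⁻¹ • U := he 0 rfl
  have hinner : ∀ i j, (e i).ofLp ⬝ᵥ (e j).ofLp = if i = j then 1 else 0 := fun i j => by
    rw [← orthonormal_iff_ite.mp e.orthonormal i j]; exact dotProduct_comm _ _
  have hu_e : u = ‖U‖ • (e 0).ofLp := by
    rw [he0, WithLp.ofLp_smul, smul_smul, mul_inv_cancel₀ hN, one_smul]
  refine ⟨(e 1).ofLp, (e 2).ofLp, by simpa using hinner 1 1, by simpa using hinner 2 2,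
    by simpa using hinner 1 2, ?_, ?_, fun v => ?_⟩
  · rw [hu_e, smul_dotProduct, hinner, if_neg (by decide), smul_zero]
  · rw [hu_e, smul_dotProduct, hinner, if_neg (by decide), smul_zero]
  · have hv := congrArg WithLp.ofLp (e.sum_repr' (WithLp.toLp 2 v))
    simp only [Fin.sum_univ_three, WithLp.ofLp_add, WithLp.ofLp_smul,
      EuclideanSpace.inner_eq_star_dotProduct, star_trivial, dotProduct_comm v] at hv
    have hcoef : u ⬝ᵥ v / u ⬝ᵥ u * ‖U‖ = (e 0).ofLp ⬝ᵥ v := by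
      rw [hu_e, smul_dotProduct, smul_dotProduct, dotProduct_smul, hinner 0 0, if_pos rfl,
        smul_eq_mul, smul_eq_mul, smul_eq_mul]
      field_simp
    conv_lhs => rw [← hv]
    rw [← hcoef, mul_smul, ← hu_e]

theorem toBilin'_apply_self {n R : Type*} [Fintype n] [DecidableEq n] [CommSemiring R]
    (M : Matrix n n R) (θ : n → R) :
    toBilin' M θ θ = ∑ j, ∑ k, M j k * θ j * θ k := by
  simp only [toBilin'_apply]
  exact Finset.sum_congr rfl fun _ _ => Finset.sum_congr rfl fun _ _ => by ring

theorem sum_sum_mul_add_mul {n R : Type*} [Fintype n] [CommSemiring R] (η w θ : n → R) :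
    ∑ j, ∑ k, (η j * w k + w j * η k) * θ j * θ k = 2 * (η ⬝ᵥ θ) * (w ⬝ᵥ θ) := by
  have hsplit : ∀ j k, (η j * w k + w j * η k) * θ j * θ k
      = η j * θ j * (w k * θ k) + w j * θ j * (η k * θ k) := fun _ _ => by ring
  simp only [hsplit, Finset.sum_add_distrib, ← Finset.sum_mul_sum, dotProduct]
  ring

def minkowski : Matrix (Fin 4) (Fin 4) ℝ := diagonal (Fin.cons (-1) fun _ : Fin 3 => 1)

theorem isSymm_minkowski : minkowski.IsSymm := isSymm_diagonal _

theorem toBilin'_minkowski_cons (s : ℝ) (v : Fin 3 → ℝ) :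
    toBilin' minkowski (Fin.cons s v) (Fin.cons s v) = -s ^ 2 + ∑ i, v i ^ 2 := by
  simp only [toBilin'_apply', minkowski, dotProduct, mulVec_diagonal, Fin.sum_univ_succ,
    Fin.cons_zero, Fin.cons_succ]
  ring

def lightCircle (η0 : ℝ) (η' : Fin 3 → ℝ) : Set (Fin 3 → ℝ) :=
  {v | ∑ i, v i ^ 2 = 1 ∧ η0 + ∑ i, η' i * v i = 0}

theorem exists_circle_frame_of_spacelike {η0 : ℝ} {η' : Fin 3 → ℝ} (hsp : η0 ^ 2 < ∑ i, η' i ^ 2) :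
    ∃ (T A C : Fin 4 → ℝ) (r : ℝ), r ≠ 0 ∧ toBilin' minkowski A A = 1 ∧
      (∀ x y : ℝ, x ^ 2 + y ^ 2 = r ^ 2 →
        ∃ v ∈ lightCircle η0 η', T + x • A + y • C = Fin.cons 1 v) ∧
      ∀ θ, (Fin.cons η0 η' : Fin 4 → ℝ) ⬝ᵥ θ = 0 → ∃ t x y : ℝ, θ = t • T + x • A + y • C := by
  have hsq : ∀ v : Fin 3 → ℝ, ∑ i, v i ^ 2 = v ⬝ᵥ v := fun v => by simp [dotProduct, sq]
  rw [hsq] at hsp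
  have hL : 0 < η' ⬝ᵥ η' := (sq_nonneg η0).trans_lt hsp
  obtain ⟨a, b, haa, hbb, hab, hηa, hηb, hdecomp⟩ :=
    exists_orthonormal_pair_orthogonal (u := η') (by rintro rfl; simp at hL)
  set k := -η0 / η' ⬝ᵥ η' with hk
  have hkL : k * η' ⬝ᵥ η' = -η0 := div_mul_cancel₀ _ hL.ne'
  have hr : 0 < 1 - k ^ 2 * η' ⬝ᵥ η' := by
    have : k ^ 2 * η' ⬝ᵥ η' * η' ⬝ᵥ η' = η0 ^ 2 := by linear_combination (k * η' ⬝ᵥ η' - η0) * hkL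
    nlinarith
  refine ⟨Fin.cons 1 (k • η'), Fin.cons 0 a, Fin.cons 0 b, √(1 - k ^ 2 * η' ⬝ᵥ η'),
    (Real.sqrt_pos.mpr hr).ne', ?_, fun x y hxy => ⟨k • η' + x • a + y • b, ⟨?_, ?_⟩, ?_⟩, ?_⟩
  · rw [toBilin'_minkowski_cons, hsq, haa]; ring
  · rw [Real.sq_sqrt hr.le] at hxy
    simp only [hsq, dotProduct_add, add_dotProduct, dotProduct_smul, smul_dotProduct, smul_eq_mul,
      dotProduct_comm a η', dotProduct_comm b η', dotProduct_comm b a, haa, hbb, hab, hηa, hηb]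
    linear_combination hxy
  · change η0 + η' ⬝ᵥ (k • η' + x • a + y • b) = 0
    simp only [dotProduct_add, dotProduct_smul, smul_eq_mul, hηa, hηb]
    linear_combination hkL
  · ext i
    refine Fin.cases ?_ (fun i => ?_) i <;> simp
  · intro θ hθ
    have hηθ : η' ⬝ᵥ Fin.tail θ = -(η0 * θ 0) := by
      rw [dotProduct, Fin.sum_univ_succ] at hθ
      simp only [Fin.cons_zero, Fin.cons_succ] at hθ
      change η0 * θ 0 + η' ⬝ᵥ Fin.tail θ = 0 at hθ
      linear_combination hθ
    refine ⟨θ 0, a ⬝ᵥ Fin.tail θ, b ⬝ᵥ Fin.tail θ, funext fun i => ?_⟩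
    refine Fin.cases (by simp) (fun i => ?_) i
    have hθi := congrFun (hdecomp (Fin.tail θ)) i
    rw [hηθ] at hθi
    simp only [Fin.tail, Pi.add_apply, Pi.smul_apply, smul_eq_mul] at hθi
    simp only [Pi.add_apply, Pi.smul_apply, Fin.cons_succ, smul_eq_mul, hθi, hk]
    ring

theorem exists_forall_ker_toBilin'_eq_mul_minkowski {η0 : ℝ} {η' : Fin 3 → ℝ}
    (hsp : η0 ^ 2 < ∑ i, η' i ^ 2) {M : Matrix (Fin 4) (Fin 4) ℝ} (hM : M.IsSymm)
    (h : ∀ v ∈ lightCircle η0 η', toBilin' M (Fin.cons 1 v) (Fin.cons 1 v) = 0) :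
    ∃ c : ℝ, ∀ θ, (Fin.cons η0 η' : Fin 4 → ℝ) ⬝ᵥ θ = 0 →
      toBilin' M θ θ = c * toBilin' minkowski θ θ := by
  obtain ⟨T, A, C, r, hr, hA, hcircle, hspan⟩ := exists_circle_frame_of_spacelike hsp
  have on_circle : ∀ N : Matrix (Fin 4) (Fin 4) ℝ,
      (∀ v ∈ lightCircle η0 η', toBilin' N (Fin.cons 1 v) (Fin.cons 1 v) = 0) →
      ∀ x y : ℝ, x ^ 2 + y ^ 2 = r ^ 2 →
        toBilin' N (T + x • A + y • C) (T + x • A + y • C) = 0 := by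
    intro N hN x y hxy
    obtain ⟨v, hv, hTv⟩ := hcircle x y hxy
    rw [hTv]
    exact hN v hv
  have hnull : ∀ v ∈ lightCircle η0 η', toBilin' minkowski (Fin.cons 1 v) (Fin.cons 1 v) = 0 :=
    fun v hv => by rw [toBilin'_minkowski_cons, hv.1]; ring
  refine ⟨toBilin' M A A, fun θ hθ => ?_⟩
  obtain ⟨t, x, y, rfl⟩ := hspan θ hθ
  rw [(isSymm_toBilin'_iff_isSymm.mpr hM).apply_self_eq_of_forall_circle hr (on_circle M h),
    (isSymm_toBilin'_iff_isSymm.mpr isSymm_minkowski).apply_self_eq_of_forall_circle hr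
      (on_circle _ hnull), hA, one_mul]

theorem exists_eq_mul_minkowski_add_of_forall_lightCircle {η0 : ℝ} {η' : Fin 3 → ℝ}
    (hsp : η0 ^ 2 < ∑ i, η' i ^ 2) {f : Matrix (Fin 4) (Fin 4) ℝ} (hf : f.IsSymm)
    (h : ∀ v ∈ lightCircle η0 η', toBilin' f (Fin.cons 1 v) (Fin.cons 1 v) = 0) :
    ∃ (c : ℝ) (w : Fin 4 → ℝ), ∀ j k, f j k = c * minkowski j k
      + (Fin.cons η0 η' : Fin 4 → ℝ) j * w k + w j * (Fin.cons η0 η' : Fin 4 → ℝ) k := by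
  obtain ⟨c, hc⟩ := exists_forall_ker_toBilin'_eq_mul_minkowski hsp hf h
  have hη : dotProductEquiv ℝ (Fin 4) (Fin.cons η0 η') ≠ 0 := by
    refine (dotProductEquiv ℝ (Fin 4)).map_ne_zero_iff.mpr fun hη => ?_
    have hη' : η' = 0 := congrArg Fin.tail hη
    simp only [hη', Pi.zero_apply, sq, mul_zero, Finset.sum_const_zero] at hsp
    exact (mul_self_nonneg η0).not_gt hsp
  have hsymm : (toBilin' (f - c • minkowski)).IsSymm :=
    isSymm_toBilin'_iff_isSymm.mpr (hf.sub (isSymm_minkowski.smul c))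
  obtain ⟨w, hw⟩ := hsymm.exists_eq_mul_add_mul_of_ker hη fun θ hθ => by
    simp only [map_sub, map_smul, LinearMap.sub_apply, LinearMap.smul_apply, hc θ hθ,
      smul_eq_mul, sub_self]
  refine ⟨c, fun j => w (Pi.single j 1), fun j k => ?_⟩
  have hjk := hw (Pi.single j 1) (Pi.single k 1)
  simp only [map_sub, map_smul, LinearMap.sub_apply, LinearMap.smul_apply, toBilin'_single,
    smul_eq_mul, dotProductEquiv_apply_apply, dotProduct_single, mul_one] at hjk
  linear_combination hjk

theorem toBilin'_self_eq_zero_of_mem_lightCircle {η0 c : ℝ} {η' : Fin 3 → ℝ}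
    {f : Matrix (Fin 4) (Fin 4) ℝ} {w : Fin 4 → ℝ}
    (hw : ∀ j k, f j k = c * minkowski j k
      + (Fin.cons η0 η' : Fin 4 → ℝ) j * w k + w j * (Fin.cons η0 η' : Fin 4 → ℝ) k)
    {v : Fin 3 → ℝ} (hv : v ∈ lightCircle η0 η') :
    toBilin' f (Fin.cons 1 v) (Fin.cons 1 v) = 0 := by
  set η : Fin 4 → ℝ := Fin.cons η0 η'
  set θ : Fin 4 → ℝ := Fin.cons 1 v
  have hηθ : η ⬝ᵥ θ = 0 := by simpa [η, θ, dotProduct, Fin.sum_univ_succ] using hv.2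
  calc toBilin' f θ θ
      = c * ∑ j, ∑ k, minkowski j k * θ j * θ k
        + ∑ j, ∑ k, (η j * w k + w j * η k) * θ j * θ k := by
        simp only [toBilin'_apply_self, hw, add_mul, Finset.sum_add_distrib, Finset.mul_sum,
          mul_assoc, add_assoc]
    _ = 0 := by
      rw [← toBilin'_apply_self, toBilin'_minkowski_cons, hv.1, sum_sum_mul_add_mul, hηθ]
      ring

/-- For a space-like covector η = (η⁰, η'), a symmetric 2-tensor f
satisfies f_{jk} θ^j θ^k = 0 for all θ = (1, v) with v ∈ S¹_η if and only if
f = c g + η ⊗ w + w ⊗ η for some c ∈ ℝ, w ∈ ℝ⁴ (Lemma 9.1 of LOSU). -/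
theorem stmt6 (η0 : ℝ) (η' : Fin 3 → ℝ) (hsp : η0 ^ 2 < ∑ i, η' i ^ 2)
    (g : Matrix (Fin 4) (Fin 4) ℝ)
    (hg : g = Matrix.diagonal (Fin.cons (-1) (fun _ : Fin 3 => 1)))
    (f : Matrix (Fin 4) (Fin 4) ℝ) (hf : f.IsSymm) :
    (∀ v : Fin 3 → ℝ, (∑ i, v i ^ 2 = 1) → (η0 + ∑ i, η' i * v i = 0) →
        ∑ j, ∑ k, f j k * (Fin.cons 1 v : Fin 4 → ℝ) j * (Fin.cons 1 v : Fin 4 → ℝ) k = 0)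
    ↔ ∃ (c : ℝ) (w : Fin 4 → ℝ), ∀ j k,
        f j k = c * g j k + (Fin.cons η0 η' : Fin 4 → ℝ) j * w k + w j * (Fin.cons η0 η' : Fin 4 → ℝ) k := by
  obtain rfl : g = minkowski := hg
  simp only [← toBilin'_apply_self]
  constructor
  · exact fun h =>
      exists_eq_mul_minkowski_add_of_forall_lightCircle hsp hf fun v hv => h v hv.1 hv.2
  · rintro ⟨c, w, hw⟩ v hv1 hv2
    exact toBilin'_self_eq_zero_of_mem_lightCircle hw ⟨hv1, hv2⟩
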